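/- Let 𝒟 = {123, 246, 145, 356, 134, 136, 146, 346} on vertex set {1,…,6} and I = I(𝒟) ⊆ K[x₁,…,x₆] its edge ideal. Set u = (x₁x₂x₃)(x₂x₄x₆) and v = (x₁x₄x₅)(x₃x₅x₆). Then u and v are minimal generators of I² lying in distinct connected components of the graph G_{I²}^{u,v}. -/
import Mathlib


open Finset

/-- A monomial in `n` variables, given by its exponent vector. -/
abbrev Mon (n : ℕ) := Fin n → ℕ

/-- Degree of a monomial. -/
def mdeg {n : ℕ} (u : Mon n) : ℕ := ∑ i, u i

/-- Divisibility of monomials. -/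
def mdvd {n : ℕ} (u v : Mon n) : Prop := ∀ i, u i ≤ v i

/-- Least common multiple of monomials. -/
def mlcm {n : ℕ} (u v : Mon n) : Mon n := fun i => max (u i) (v i)

/-- Products of `k` generators taken from `S`, i.e. the (not necessarily minimal)
monomial generators of `I^k` where `I` is generated by `S`.
(Products of monomials correspond to sums of exponent vectors.) -/
def powGen {n : ℕ} (S : Finset (Mon n)) (k : ℕ) : Set (Mon n) :=
  { m | ∃ f : Fin k → Mon n, (∀ i, f i ∈ S) ∧ m = ∑ i, f i }

/-- The minimal monomial generating set `𝒢(I^k)`. -/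
def minGen {n : ℕ} (S : Finset (Mon n)) (k : ℕ) : Set (Mon n) :=
  { m | m ∈ powGen S k ∧ ∀ m' ∈ powGen S k, mdvd m' m → m' = m }

/-- Adjacency in the graph `G_{I^k}^{u,v}`: both endpoints are minimal generators of `I^k`
dividing `lcm(u,v)`, and the degree of their lcm is `d·k + 1`. -/
def adj {n : ℕ} (S : Finset (Mon n)) (d k : ℕ) (u v a b : Mon n) : Prop :=
  a ∈ minGen S k ∧ b ∈ minGen S k ∧
    mdvd a (mlcm u v) ∧ mdvd b (mlcm u v) ∧ mdeg (mlcm a b) = d * k + 1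

/-- `a` and `b` are connected by a path in `G_{I^k}^{u,v}`. -/
def connectedIn {n : ℕ} (S : Finset (Mon n)) (d k : ℕ) (u v a b : Mon n) : Prop :=
  Relation.ReflTransGen (adj S d k u v) a b

/-- The squarefree monomial supported on `F`. -/
def xF {n : ℕ} (F : Finset (Fin n)) : Mon n := fun i => if i ∈ F then 1 else 0

/- The Sturmfels clutter 𝒟 = {123, 246, 145, 356, 134, 136, 146, 346}
(vertices 1,…,6 correspond to indices 0,…,5). -/
def sturmfels : Finset (Finset (Fin 6)) :=
  { {0,1,2}, {1,3,5}, {0,3,4}, {2,4,5}, {0,2,3}, {0,2,5}, {0,3,5}, {2,3,5} }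

instance {n : ℕ} (u v : Mon n) : Decidable (mdvd u v) :=
  inferInstanceAs (Decidable (∀ i, u i ≤ v i))

lemma mem_powGen_two {n : ℕ} (S : Finset (Mon n)) (m : Mon n) :
    m ∈ powGen S 2 ↔ ∃ p ∈ S, ∃ q ∈ S, m = p + q := by
  constructor
  · rintro ⟨f, hf, rfl⟩
    exact ⟨f 0, hf 0, f 1, hf 1, by simp [Fin.sum_univ_two]⟩
  · rintro ⟨p, hp, q, hq, rfl⟩
    refine ⟨![p, q], ?_, by simp [Fin.sum_univ_two]⟩
    intro i
    fin_cases i <;> simpa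

lemma key_u : ∀ p ∈ sturmfels.image xF, ∀ q ∈ sturmfels.image xF,
    mdvd (p + q) (xF {0,1,2} + xF {1,3,5}) → p + q = xF {0,1,2} + xF {1,3,5} := by
  decide

lemma key_v : ∀ p ∈ sturmfels.image xF, ∀ q ∈ sturmfels.image xF,
    mdvd (p + q) (xF {0,3,4} + xF {2,4,5}) → p + q = xF {0,3,4} + xF {2,4,5} := by
  decide

lemma key_div : ∀ p ∈ sturmfels.image xF, ∀ q ∈ sturmfels.image xF,
    mdvd (p + q) (mlcm (xF {0,1,2} + xF {1,3,5}) (xF {0,3,4} + xF {2,4,5})) →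
      p + q = xF {0,1,2} + xF {1,3,5} ∨ p + q = xF {0,3,4} + xF {2,4,5} := by
  decide

theorem stmt13 :
    let S : Finset (Mon 6) := sturmfels.image xF
    let u : Mon 6 := xF {0,1,2} + xF {1,3,5}
    let v : Mon 6 := xF {0,3,4} + xF {2,4,5}
    u ∈ minGen S 2 ∧ v ∈ minGen S 2 ∧ ¬ connectedIn S 3 2 u v u v := by
  intro S u v
  have h12 : xF (n := 6) {0,1,2} ∈ S := Finset.mem_image_of_mem xF (by decide)
  have h135 : xF (n := 6) {1,3,5} ∈ S := Finset.mem_image_of_mem xF (by decide)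
  have h034 : xF (n := 6) {0,3,4} ∈ S := Finset.mem_image_of_mem xF (by decide)
  have h245 : xF (n := 6) {2,4,5} ∈ S := Finset.mem_image_of_mem xF (by decide)
  have hu : u ∈ minGen S 2 := by
    refine ⟨(mem_powGen_two S u).mpr ⟨_, h12, _, h135, rfl⟩, ?_⟩
    intro m' hm' hd
    obtain ⟨p, hp, q, hq, rfl⟩ := (mem_powGen_two S m').mp hm'
    exact key_u p hp q hq hd
  have hv : v ∈ minGen S 2 := by
    refine ⟨(mem_powGen_two S v).mpr ⟨_, h034, _, h245, rfl⟩, ?_⟩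
    intro m' hm' hd
    obtain ⟨p, hp, q, hq, rfl⟩ := (mem_powGen_two S m').mp hm'
    exact key_v p hp q hq hd
  refine ⟨hu, hv, ?_⟩
  intro hconn
  have huv : u ≠ v := by decide
  have hdeg : mdeg (mlcm u v) ≠ 3 * 2 + 1 := by decide
  have key : ∀ b, Relation.ReflTransGen (adj S 3 2 u v) u b → b = u := by
    intro b h
    induction h with
    | refl => rfl
    | tail h' hadj ih =>
      subst ih
      obtain ⟨-, hb, -, hbdvd, hdlcm⟩ := hadj
      obtain ⟨p, hp, q, hq, rfl⟩ := (mem_powGen_two S _).mp hb.1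
      rcases key_div p hp q hq hbdvd with h | h
      · exact h
      · rw [h] at hdlcm; exact absurd hdlcm hdeg
  exact huv ((key v hconn).symm)
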